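/- arXiv:1403.1696 — 2 statements merged into one kernel-verified Lean document; each statement's English description precedes it below -/
import Mathlib

section
/- For a random vector z with mean zero and covariance Σ_z and a fixed matrix A_Ω satisfying the RIP bound of order K (|Ω| ≤ K), the oracle error satisfies E_z[‖A_Ω† z‖²] ≤ (K/(1−δ_K)) · λ_max(Σ_z). -/
/-!
Writing `C = E[z zᵀ]` for the second-moment matrix of `z`, the error equals `∑ᵢ bᵢᵀ C bᵢ` over
the rows `bᵢ` of `B = A_Ω†`, which is at most `λ_max(C) ‖B‖_F²`; and `λ_max(C) ≥ 0` as `C` is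
positive semidefinite. The Penrose conditions make `A_Ω B` an orthogonal projection and, since
the RIP lower bound makes `A_Ω` injective, `B A_Ω = 1`; hence
`‖A_Ω B‖_F² = tr(A_Ω B) = tr(B A_Ω) = |Ω|`. Applying the RIP lower bound to each column of `B`
gives `(1 - δ) ‖B‖_F² ≤ ‖A_Ω B‖_F² ≤ K`.
-/

open Matrix MeasureTheory

/-- The four Penrose conditions characterizing the Moore–Penrose pseudoinverse. -/
def IsMoorePenrose {m n : Type*} [Fintype m] [Fintype n]
    (A : Matrix m n ℝ) (B : Matrix n m ℝ) : Prop :=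
  A * B * A = A ∧ B * A * B = B ∧ (A * B)ᵀ = A * B ∧ (B * A)ᵀ = B * A

theorem Finset.sum_apply_extend_val {ι α M : Type*} [Fintype ι] [Zero α] [AddCommMonoid M]
    {S : Finset ι} (v : S → α) (f : ι → α → M) (hf : ∀ i, f i 0 = 0) :
    ∑ i, f i (Subtype.val.extend v 0 i) = ∑ s : S, f s (v s) := by
  rw [← Finset.sum_subset S.subset_univ fun i _ hi => by
    rw [Function.extend_apply' _ _ _ (by simpa), Pi.zero_apply, hf], ← Finset.sum_coe_sort S]
  exact Finset.sum_congr rfl fun s _ => by rw [Subtype.val_injective.extend_apply]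

namespace Matrix

theorem IsHermitian.dotProduct_mulVec_le_iSup_eigenvalues_mul {n : Type*} [Fintype n]
    [DecidableEq n] {M : Matrix n n ℝ} (hM : M.IsHermitian) (v : n → ℝ) :
    v ⬝ᵥ M *ᵥ v ≤ (⨆ i, hM.eigenvalues i) * ∑ i, v i ^ 2 := by
  set U : Matrix n n ℝ := (hM.eigenvectorUnitary : Matrix n n ℝ)
  set w : n → ℝ := Uᵀ *ᵥ v
  have hUUt : U * Uᵀ = 1 := by
    simpa [U, star_eq_conjTranspose] using mem_unitaryGroup_iff.mp hM.eigenvectorUnitary.2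
  have hquad : v ⬝ᵥ M *ᵥ v = ∑ j, hM.eigenvalues j * w j ^ 2 := by
    conv_lhs => rw [hM.spectral_theorem, Unitary.conjStarAlgAut_apply]
    rw [star_eq_conjTranspose, conjTranspose_eq_transpose_of_trivial, ← mulVec_mulVec,
      ← mulVec_mulVec, dotProduct_mulVec, ← mulVec_transpose]
    simp only [dotProduct, mulVec_diagonal, Function.comp_apply, RCLike.ofReal_real_eq_id, id]
    exact Finset.sum_congr rfl fun j _ => by ring
  have hnorm : ∑ j, w j ^ 2 = ∑ i, v i ^ 2 := by
    have : w ⬝ᵥ w = v ⬝ᵥ v := by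
      rw [dotProduct_mulVec, ← mulVec_transpose, transpose_transpose, mulVec_mulVec, hUUt,
        one_mulVec]
    simpa only [dotProduct, sq] using this
  have hle : ∀ j, hM.eigenvalues j ≤ ⨆ i, hM.eigenvalues i :=
    le_ciSup (Set.finite_range _).bddAbove
  rw [hquad, ← hnorm, Finset.mul_sum]
  exact Finset.sum_le_sum fun j _ => mul_le_mul_of_nonneg_right (hle j) (sq_nonneg _)

theorem injective_mulVec_of_mul_sum_sq_le {m n : Type*} [Fintype m] [Fintype n]
    {A : Matrix m n ℝ} {c : ℝ} (hc : 0 < c)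
    (hA : ∀ v, c * ∑ j, v j ^ 2 ≤ ∑ i, (A *ᵥ v) i ^ 2) : Function.Injective A.mulVec := by
  refine (injective_iff_map_eq_zero A.mulVecLin).mpr fun v (hv : A *ᵥ v = 0) => ?_
  have hsum : ∑ j, v j ^ 2 = 0 := by
    have h := hA v
    simp only [hv, Pi.zero_apply, zero_pow two_ne_zero, Finset.sum_const_zero] at h
    exact le_antisymm (nonpos_of_mul_nonpos_right h hc) (by positivity)
  funext j
  simpa using congrFun ((Fintype.sum_eq_zero_iff_of_nonneg fun j => sq_nonneg (v j)).mp hsum) j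

theorem mul_eq_one_of_mul_mul_eq_self {m n R : Type*} [Semiring R] [Fintype m] [Fintype n]
    [DecidableEq n] {A : Matrix m n R} {B : Matrix n m R} (h : A * B * A = A)
    (hA : Function.Injective A.mulVec) : B * A = 1 :=
  ext_iff_mulVec.mpr fun v => hA <| by rw [mulVec_mulVec, ← Matrix.mul_assoc, h, one_mulVec]

theorem sum_sq_eq_trace_of_transpose_eq_of_mul_self {n R : Type*} [Semiring R] [Fintype n]
    {P : Matrix n n R} (hsymm : Pᵀ = P) (hidem : P * P = P) :
    ∑ i, ∑ j, P i j ^ 2 = P.trace := by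
  conv_rhs => rw [← hidem]
  refine Finset.sum_congr rfl fun i _ => Finset.sum_congr rfl fun j _ => ?_
  rw [sq]
  nth_rewrite 2 [← hsymm]
  rfl

theorem mul_sum_sq_le_sum_sq_submatrix_mulVec {m ι : Type*} [Fintype m] [Fintype ι]
    (A : Matrix m ι ℝ) {K : ℕ} {c : ℝ}
    (hA : ∀ θ : ι → ℝ, Set.ncard {i | θ i ≠ 0} ≤ K → c * ∑ i, θ i ^ 2 ≤ ∑ i, (A *ᵥ θ) i ^ 2)
    {S : Finset ι} (hS : S.card ≤ K) (v : S → ℝ) :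
    c * ∑ s, v s ^ 2 ≤ ∑ i, (A.submatrix id Subtype.val *ᵥ v) i ^ 2 := by
  set θ : ι → ℝ := Subtype.val.extend v 0
  have hsupp : Set.ncard {i | θ i ≠ 0} ≤ K := by
    refine le_trans (Set.ncard_le_ncard (fun i hi => ?_) S.finite_toSet) (by simpa using hS)
    by_contra hiS
    exact hi (Function.extend_apply' _ _ _ (by simpa))
  have hmulVec : A *ᵥ θ = A.submatrix id Subtype.val *ᵥ v := by
    ext i
    exact Finset.sum_apply_extend_val v (fun j x => A i j * x) fun j => mul_zero _
  have hnorm : ∑ i, θ i ^ 2 = ∑ s, v s ^ 2 :=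
    Finset.sum_apply_extend_val v (fun _ x => x ^ 2) fun _ => zero_pow two_ne_zero
  rw [← hnorm, ← hmulVec]
  exact hA θ hsupp

end Matrix

theorem IsMoorePenrose.mul_sum_sq_le_card {m n : Type*} [Fintype m] [Fintype n] [DecidableEq n]
    {A : Matrix m n ℝ} {B : Matrix n m ℝ} (hB : IsMoorePenrose A B) {c : ℝ} (hc : 0 < c)
    (hA : ∀ v, c * ∑ j, v j ^ 2 ≤ ∑ i, (A *ᵥ v) i ^ 2) :
    c * ∑ j, ∑ i, B j i ^ 2 ≤ Fintype.card n := by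
  have hBA : B * A = 1 :=
    mul_eq_one_of_mul_mul_eq_self hB.1 (injective_mulVec_of_mul_sum_sq_le hc hA)
  have hidem : A * B * (A * B) = A * B := by rw [← Matrix.mul_assoc, hB.1]
  calc c * ∑ j, ∑ i, B j i ^ 2 = ∑ i, c * ∑ j, Bᵀ i j ^ 2 := by
        rw [Finset.sum_comm, Finset.mul_sum]; rfl
    _ ≤ ∑ i, ∑ k, (A *ᵥ Bᵀ i) k ^ 2 := Finset.sum_le_sum fun i _ => hA _
    _ = ∑ k, ∑ i, (A * B) k i ^ 2 := by rw [Finset.sum_comm]; rfl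
    _ = (A * B).trace := sum_sq_eq_trace_of_transpose_eq_of_mul_self hB.2.2.1 hidem
    _ = Fintype.card n := by rw [trace_mul_comm, hBA, trace_one]

section SecondMoment

variable {Ω ι : Type*} [MeasurableSpace Ω] {μ : Measure Ω} [Fintype ι] {z : Ω → ι → ℝ}
  {C : Matrix ι ι ℝ}

theorem dotProduct_mul_dotProduct_eq_sum (u v x : ι → ℝ) :
    (u ⬝ᵥ x) * (v ⬝ᵥ x) = ∑ j, ∑ k, u j * v k * (x j * x k) := by
  rw [dotProduct, dotProduct, Finset.sum_mul_sum]
  exact Finset.sum_congr rfl fun j _ => Finset.sum_congr rfl fun k _ => by ring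

theorem integrable_dotProduct_mul_dotProduct
    (hzint : ∀ i j, Integrable (fun ω => z ω i * z ω j) μ) (u v : ι → ℝ) :
    Integrable (fun ω => (u ⬝ᵥ z ω) * (v ⬝ᵥ z ω)) μ := by
  simp_rw [dotProduct_mul_dotProduct_eq_sum]
  exact integrable_finsetSum _ fun j _ => integrable_finsetSum _ fun k _ => (hzint j k).const_mul _

theorem integral_dotProduct_mul_dotProduct
    (hzint : ∀ i j, Integrable (fun ω => z ω i * z ω j) μ)
    (hzcov : ∀ i j, ∫ ω, z ω i * z ω j ∂μ = C i j) (u v : ι → ℝ) :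
    ∫ ω, (u ⬝ᵥ z ω) * (v ⬝ᵥ z ω) ∂μ = u ⬝ᵥ C *ᵥ v := by
  have hint : ∀ j k, Integrable (fun ω => u j * v k * (z ω j * z ω k)) μ :=
    fun j k => (hzint j k).const_mul _
  simp_rw [dotProduct_mul_dotProduct_eq_sum]
  rw [integral_finsetSum _ fun j _ => integrable_finsetSum _ fun k _ => hint j k]
  simp_rw [integral_finsetSum _ fun k _ => hint _ k, integral_const_mul, hzcov]
  simp only [dotProduct, mulVec, Finset.mul_sum]
  exact Finset.sum_congr rfl fun j _ => Finset.sum_congr rfl fun k _ => by ring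

theorem posSemidef_of_integral_mul_eq (hzint : ∀ i j, Integrable (fun ω => z ω i * z ω j) μ)
    (hzcov : ∀ i j, ∫ ω, z ω i * z ω j ∂μ = C i j) : C.PosSemidef := by
  refine .of_dotProduct_mulVec_nonneg (.ext fun i j => ?_) fun x => ?_
  · simp only [star_trivial, ← hzcov, mul_comm]
  · rw [star_trivial, ← integral_dotProduct_mul_dotProduct hzint hzcov]
    exact integral_nonneg fun ω => mul_self_nonneg _

theorem integral_sum_sq_mulVec (hzint : ∀ i j, Integrable (fun ω => z ω i * z ω j) μ)
    (hzcov : ∀ i j, ∫ ω, z ω i * z ω j ∂μ = C i j) {m : Type*} [Fintype m] (B : Matrix m ι ℝ) :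
    ∫ ω, ∑ i, (B *ᵥ z ω) i ^ 2 ∂μ = ∑ i, B i ⬝ᵥ C *ᵥ B i := by
  simp_rw [sq]
  exact (integral_finsetSum _ fun i _ => integrable_dotProduct_mul_dotProduct hzint _ _).trans
    (Finset.sum_congr rfl fun i _ => integral_dotProduct_mul_dotProduct hzint hzcov _ _)

end SecondMoment

theorem stmt16_general (Mdim N K : ℕ) (A : Matrix (Fin Mdim) (Fin N) ℝ) (δ : ℝ) (hδ : δ < 1)
    (hRIP : ∀ θ : Fin N → ℝ, Set.ncard {i | θ i ≠ 0} ≤ K →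
      (1 - δ) * ∑ i, θ i ^ 2 ≤ ∑ i, (A.mulVec θ i) ^ 2 ∧
      ∑ i, (A.mulVec θ i) ^ 2 ≤ (1 + δ) * ∑ i, θ i ^ 2)
    (S : Finset (Fin N)) (hS : S.card ≤ K)
    (AΩ : Matrix (Fin Mdim) {j // j ∈ S} ℝ)
    (hAΩ : AΩ = A.submatrix id (Subtype.val : {j // j ∈ S} → Fin N))
    (B : Matrix {j // j ∈ S} (Fin Mdim) ℝ) (hB : IsMoorePenrose AΩ B)
    {Ω : Type*} [MeasureSpace Ω] (μ : Measure Ω)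
    (z : Ω → Fin Mdim → ℝ) (Sz : Matrix (Fin Mdim) (Fin Mdim) ℝ)
    (hzint : ∀ i j, Integrable (fun ω => z ω i * z ω j) μ)
    (hzcov : ∀ i j, ∫ ω, z ω i * z ω j ∂μ = Sz i j)
    (hSz : Sz.IsHermitian) :
    ∫ ω, ∑ i, (B.mulVec (z ω) i) ^ 2 ∂μ ≤ (K : ℝ) / (1 - δ) * ⨆ i, hSz.eigenvalues i := by
  set lamMax := ⨆ i, hSz.eigenvalues i
  have hδ' : 0 < 1 - δ := by linarith
  have hAΩ_lower : ∀ v, (1 - δ) * ∑ s, v s ^ 2 ≤ ∑ i, (AΩ *ᵥ v) i ^ 2 := hAΩ ▸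
    A.mul_sum_sq_le_sum_sq_submatrix_mulVec (fun θ hθ => (hRIP θ hθ).1) hS
  have hB_frob : ∑ s, ∑ i, B s i ^ 2 ≤ K / (1 - δ) := by
    rw [le_div_iff₀' hδ']
    exact (hB.mul_sum_sq_le_card hδ' hAΩ_lower).trans (by simpa using hS)
  have hlamMax : 0 ≤ lamMax :=
    Real.iSup_nonneg (posSemidef_of_integral_mul_eq hzint hzcov).eigenvalues_nonneg
  rw [integral_sum_sq_mulVec hzint hzcov]
  calc ∑ s, B s ⬝ᵥ Sz *ᵥ B s ≤ ∑ s, lamMax * ∑ i, B s i ^ 2 :=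
        Finset.sum_le_sum fun s _ => hSz.dotProduct_mulVec_le_iSup_eigenvalues_mul (B s)
    _ = lamMax * ∑ s, ∑ i, B s i ^ 2 := Finset.mul_sum .. |>.symm
    _ ≤ lamMax * (K / (1 - δ)) := mul_le_mul_of_nonneg_left hB_frob hlamMax
    _ = K / (1 - δ) * lamMax := mul_comm _ _

/-- For zero-mean noise `z` with covariance `Σ_z` and a fixed matrix `A` satisfying the
RIP of order `K` with constant `δ_K < 1`, for any support `Ω` with `|Ω| ≤ K` the oracle
error satisfies `E_z[‖A_Ω† z‖²] ≤ (K/(1−δ_K)) λ_max(Σ_z)`. -/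
theorem stmt16 (Mdim N K : ℕ) (A : Matrix (Fin Mdim) (Fin N) ℝ) (δ : ℝ) (hδ : δ < 1)
    (hRIP : ∀ θ : Fin N → ℝ, Set.ncard {i | θ i ≠ 0} ≤ K →
      (1 - δ) * ∑ i, θ i ^ 2 ≤ ∑ i, (A.mulVec θ i) ^ 2 ∧
      ∑ i, (A.mulVec θ i) ^ 2 ≤ (1 + δ) * ∑ i, θ i ^ 2)
    (S : Finset (Fin N)) (hS : S.card ≤ K)
    (AΩ : Matrix (Fin Mdim) {j // j ∈ S} ℝ)
    (hAΩ : AΩ = A.submatrix id (Subtype.val : {j // j ∈ S} → Fin N))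
    (B : Matrix {j // j ∈ S} (Fin Mdim) ℝ) (hB : IsMoorePenrose AΩ B)
    {Ω : Type*} [MeasureSpace Ω] (μ : Measure Ω) [IsProbabilityMeasure μ]
    (z : Ω → Fin Mdim → ℝ) (Sz : Matrix (Fin Mdim) (Fin Mdim) ℝ)
    (hzint : ∀ i j, Integrable (fun ω => z ω i * z ω j) μ)
    (hzmean : ∀ i, ∫ ω, z ω i ∂μ = 0)
    (hzcov : ∀ i j, ∫ ω, z ω i * z ω j ∂μ = Sz i j)
    (hSz : Sz.IsHermitian) :
    ∫ ω, ∑ i, (B.mulVec (z ω) i) ^ 2 ∂μ ≤ (K : ℝ) / (1 - δ) * ⨆ i, hSz.eigenvalues i :=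
  stmt16_general Mdim N K A δ hδ hRIP S hS AΩ hAΩ B hB μ z Sz hzint hzcov hSz
end

section
/- For a fixed matrix A_Ω satisfying the RIP of order K with constant δ_K < 1 and white noise z with covariance σ_z² I, the oracle error satisfies (K/(1+δ_K)) σ_z² ≤ E_z[‖A_Ω† z‖²] ≤ (K/(1−δ_K)) σ_z². -/
open Matrix MeasureTheory

section PseudoinverseTrace

variable {m n : Type*} [Fintype m] [Fintype n]

namespace Matrix

theorem IsHermitian.trace_mem_Icc_of_spectrum_subset [DecidableEq n] {S : Matrix n n ℝ}
    (hS : S.IsHermitian) {a b : ℝ} (h : spectrum ℝ S ⊆ Set.Icc a b) :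
    S.trace ∈ Set.Icc (Fintype.card n * a) (Fintype.card n * b) := by
  have heig (i : n) := h (hS.eigenvalues_mem_spectrum_real i)
  rw [hS.trace_eq_sum_eigenvalues]
  constructor
  · simpa using Finset.sum_le_sum fun i (_ : i ∈ Finset.univ) => (heig i).1
  · simpa using Finset.sum_le_sum fun i (_ : i ∈ Finset.univ) => (heig i).2

theorem spectrum_inv_subset_Icc [DecidableEq n] {G : Matrix n n ℝ} (hG : IsUnit G) {a b : ℝ}
    (ha : 0 < a) (h : spectrum ℝ G ⊆ Set.Icc a b) : spectrum ℝ G⁻¹ ⊆ Set.Icc b⁻¹ a⁻¹ := by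
  obtain ⟨u, rfl⟩ := hG
  rw [← coe_units_inv, ← spectrum.map_inv]
  intro x hx
  obtain ⟨hax, hxb⟩ := h (Set.mem_inv.mp hx)
  have hx0 : 0 < x := inv_pos.mp (ha.trans_le hax)
  exact ⟨inv_le_of_inv_le₀ hx0 hxb, (le_inv_comm₀ ha hx0).mp hax⟩

theorem sum_sq_mulVec (B : Matrix m n ℝ) (v : n → ℝ) :
    ∑ i, (B *ᵥ v) i ^ 2 = ∑ j, ∑ k, (Bᵀ * B) j k * (v j * v k) := by
  simp only [mulVec, dotProduct, sq, mul_apply, transpose_apply, Finset.sum_mul, Finset.mul_sum]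
  rw [Finset.sum_comm]
  refine Finset.sum_congr rfl fun j _ => ?_
  rw [Finset.sum_comm]
  exact Finset.sum_congr rfl fun k _ => Finset.sum_congr rfl fun i _ => by ring

end Matrix

namespace IsMoorePenrose

variable [DecidableEq n] {A : Matrix m n ℝ} {B : Matrix n m ℝ}

theorem mul_transpose_eq_inv (hB : IsMoorePenrose A B) (hG : IsUnit (Aᵀ * A)) :
    B * Bᵀ = (Aᵀ * A)⁻¹ := by
  have hBA : B * A = 1 := hG.mul_left_cancel <| by
    rw [Matrix.mul_one, Matrix.mul_assoc, ← Matrix.mul_assoc A, hB.1]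
  have hB_eq : B = B * Bᵀ * Aᵀ :=
    calc B = B * (A * B)ᵀ := by rw [hB.2.2.1, ← Matrix.mul_assoc, hB.2.1]
      _ = B * Bᵀ * Aᵀ := by rw [transpose_mul, Matrix.mul_assoc]
  refine (inv_eq_left_inv ?_).symm
  rw [← Matrix.mul_assoc, ← hB_eq, hBA]

theorem trace_mul_transpose_mem_Icc (hB : IsMoorePenrose A B) {a b : ℝ} (ha : 0 < a)
    (h : spectrum ℝ (Aᵀ * A) ⊆ Set.Icc a b) :
    trace (B * Bᵀ) ∈ Set.Icc (Fintype.card n / b) (Fintype.card n / a) := by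
  have hG : IsUnit (Aᵀ * A) := by
    by_contra hG
    exact ha.not_ge (h ((spectrum.zero_mem_iff ℝ).mpr hG)).1
  have hGherm : (Aᵀ * A).IsHermitian := by
    simpa [conjTranspose_eq_transpose_of_trivial] using isHermitian_conjTranspose_mul_self A
  rw [hB.mul_transpose_eq_inv hG, div_eq_mul_inv, div_eq_mul_inv]
  exact hGherm.inv.trace_mem_Icc_of_spectrum_subset (spectrum_inv_subset_Icc hG ha h)

end IsMoorePenrose

section WhiteNoise

variable {Ω : Type*} [MeasurableSpace Ω] {μ : Measure Ω} {z : Ω → n → ℝ} {v : ℝ}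

theorem integral_quadForm_eq_mul_trace [DecidableEq n] (Q : Matrix n n ℝ)
    (hint : ∀ j k, Integrable (fun ω => z ω j * z ω k) μ)
    (hcov : ∀ j k, ∫ ω, z ω j * z ω k ∂μ = if j = k then v else 0) :
    ∫ ω, ∑ j, ∑ k, Q j k * (z ω j * z ω k) ∂μ = v * trace Q := by
  have hint' (j k : n) : Integrable (fun ω => Q j k * (z ω j * z ω k)) μ :=
    (hint j k).const_mul _
  rw [integral_finsetSum _ fun j _ => integrable_finsetSum _ fun k _ => hint' j k]
  simp_rw [integral_finsetSum _ fun k _ => hint' _ k, integral_const_mul, hcov,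
    mul_ite, mul_zero, Finset.sum_ite_eq, Finset.mem_univ, if_true]
  rw [trace, Finset.mul_sum]
  exact Finset.sum_congr rfl fun j _ => mul_comm _ _

theorem integral_sum_sq_mulVec_eq_mul_trace [DecidableEq n] (B : Matrix m n ℝ)
    (hint : ∀ j k, Integrable (fun ω => z ω j * z ω k) μ)
    (hcov : ∀ j k, ∫ ω, z ω j * z ω k ∂μ = if j = k then v else 0) :
    ∫ ω, ∑ i, (B *ᵥ z ω) i ^ 2 ∂μ = v * trace (B * Bᵀ) := by
  simp_rw [sum_sq_mulVec]
  rw [integral_quadForm_eq_mul_trace _ hint hcov, trace_mul_comm]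

end WhiteNoise

end PseudoinverseTrace

theorem stmt17_general (Mdim K : ℕ) (AΩ : Matrix (Fin Mdim) (Fin K) ℝ) (δ : ℝ)
    (hδ0 : 0 < δ) (hδ : δ < 1)
    (hspec : ∀ lam ∈ spectrum ℝ (AΩᵀ * AΩ), lam ∈ Set.Icc (1 - δ) (1 + δ))
    (B : Matrix (Fin K) (Fin Mdim) ℝ) (hB : IsMoorePenrose AΩ B)
    {Ω : Type*} [MeasureSpace Ω] (μ : Measure Ω)
    (z : Ω → Fin Mdim → ℝ) (vz : ℝ)
    (hzint : ∀ i j, Integrable (fun ω => z ω i * z ω j) μ)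
    (hzcov : ∀ i j, ∫ ω, z ω i * z ω j ∂μ = if i = j then vz else 0) :
    (K : ℝ) / (1 + δ) * vz ≤ ∫ ω, ∑ i, (B.mulVec (z ω) i) ^ 2 ∂μ ∧
    ∫ ω, ∑ i, (B.mulVec (z ω) i) ^ 2 ∂μ ≤ (K : ℝ) / (1 - δ) * vz := by
  obtain ⟨hlo, hhi⟩ := hB.trace_mul_transpose_mem_Icc (sub_pos.mpr hδ) hspec
  rw [Fintype.card_fin] at hlo hhi
  rw [integral_sum_sq_mulVec_eq_mul_trace B hzint hzcov]
  rcases isEmpty_or_nonempty (Fin Mdim) with hM | ⟨⟨j⟩⟩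
  · -- without noise coordinates `vz` is unconstrained, but the trace vanishes and forces `K = 0`
    have htr : trace (B * Bᵀ) = 0 := by simp [trace, mul_apply]
    have hK : (K : ℝ) = 0 := by
      rw [htr, div_nonpos_iff] at hlo
      rcases hlo with ⟨-, h⟩ | ⟨h, -⟩ <;> [linarith; exact le_antisymm h K.cast_nonneg]
    simp [htr, hK]
  · have hvz : 0 ≤ vz := by
      rw [← (hzcov j j).trans (if_pos rfl)]
      exact integral_nonneg fun ω => mul_self_nonneg _
    rw [mul_comm vz]
    exact ⟨mul_le_mul_of_nonneg_right hlo hvz, mul_le_mul_of_nonneg_right hhi hvz⟩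

/-- For a fixed `M×K` matrix `A_Ω` whose Gram matrix has all eigenvalues in
`[1−δ_K, 1+δ_K]` with `δ_K ∈ (0,1)` (the RIP bound), and white noise `z` with
covariance `σ_z² I`, the oracle error satisfies
`(K/(1+δ_K)) σ_z² ≤ E_z[‖A_Ω† z‖²] ≤ (K/(1−δ_K)) σ_z²`. -/
theorem stmt17 (Mdim K : ℕ) (AΩ : Matrix (Fin Mdim) (Fin K) ℝ) (δ : ℝ)
    (hδ0 : 0 < δ) (hδ : δ < 1)
    (hspec : ∀ lam ∈ spectrum ℝ (AΩᵀ * AΩ), lam ∈ Set.Icc (1 - δ) (1 + δ))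
    (B : Matrix (Fin K) (Fin Mdim) ℝ) (hB : IsMoorePenrose AΩ B)
    {Ω : Type*} [MeasureSpace Ω] (μ : Measure Ω) [IsProbabilityMeasure μ]
    (z : Ω → Fin Mdim → ℝ) (vz : ℝ)
    (hzint : ∀ i j, Integrable (fun ω => z ω i * z ω j) μ)
    (hzmean : ∀ i, ∫ ω, z ω i ∂μ = 0)
    (hzcov : ∀ i j, ∫ ω, z ω i * z ω j ∂μ = if i = j then vz else 0) :
    (K : ℝ) / (1 + δ) * vz ≤ ∫ ω, ∑ i, (B.mulVec (z ω) i) ^ 2 ∂μ ∧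
    ∫ ω, ∑ i, (B.mulVec (z ω) i) ^ 2 ∂μ ≤ (K : ℝ) / (1 - δ) * vz :=
  stmt17_general Mdim K AΩ δ hδ0 hδ hspec B hB μ z vz hzint hzcov
end
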